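/- Let M be a real N×N matrix with Mᵢⱼ ≤ 0 for all i ≠ j. Suppose there exist vectors x, y ∈ ℝᴺ with all entries strictly positive such that every entry of M·x and every entry of Mᵀ·y is strictly positive. Then, with W = diag(y₁/x₁, …, y_N/x_N), the symmetric matrix W·M + Mᵀ·W is positive definite. -/

import Mathlib

open Matrix

/-- Rigorous form of Lemma 1 / Proposition 1: if `M` is a Z-matrix and there are
entrywise positive vectors `x`, `y` with `M·x` and `Mᵀ·y` entrywise positive, then with
`W = diag(yᵢ/xᵢ)` the symmetric matrix `W·M + Mᵀ·W` is positive definite. -/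
theorem zmatrix_diag_scaling_posDef (N : ℕ) (M : Matrix (Fin N) (Fin N) ℝ)
    (hM : ∀ i j : Fin N, i ≠ j → M i j ≤ 0)
    (x y : Fin N → ℝ) (hx : ∀ i, 0 < x i) (hy : ∀ i, 0 < y i)
    (hMx : ∀ i, 0 < M.mulVec x i) (hMy : ∀ i, 0 < Mᵀ.mulVec y i) :
    (Matrix.diagonal (fun i => y i / x i) * M +
      Mᵀ * Matrix.diagonal (fun i => y i / x i)).PosDef := by
  classical
  set Q : Matrix (Fin N) (Fin N) ℝ :=
    Matrix.diagonal (fun i => y i / x i) * M +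
      Mᵀ * Matrix.diagonal (fun i => y i / x i) with hQ
  have hQapp : ∀ i j, Q i j = (y i / x i) * M i j + M j i * (y j / x j) := by
    intro i j
    simp [hQ, Matrix.add_apply, Matrix.diagonal_mul, Matrix.mul_diagonal,
      Matrix.transpose_apply]
  refine Matrix.posDef_iff_dotProduct_mulVec.mpr ⟨?_, ?_⟩
  · -- Hermitian
    ext i j
    simp only [Matrix.conjTranspose_apply, star_trivial]
    rw [hQapp, hQapp]
    ring
  · intro v hv
    -- B i j = y i * M i j * x j, u i = v i / x i
    set B : Fin N → Fin N → ℝ := fun i j => y i * M i j * x j with hB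
    set u : Fin N → ℝ := fun i => v i / x i with hu
    have hxne : ∀ i, x i ≠ 0 := fun i => (hx i).ne'
    have hquad : dotProduct (star v) (Q *ᵥ v) = ∑ i, ∑ j, Q i j * v i * v j := by
      simp only [star_trivial, dotProduct, Matrix.mulVec, dotProduct,
        Finset.mul_sum]
      congr 1; ext i; congr 1; ext j; ring
    have hterm : ∀ i j, Q i j * v i * v j = (B i j + B j i) * (u i * u j) := by
      intro i j
      rw [hQapp]
      have h1 := hxne i
      have h2 := hxne j
      simp only [hB, hu]
      field_simp
    -- per-pair decomposition
    have hpair : ∀ i j, (B i j + B j i) * (u i * u j)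
        = (B i j + B j i) * u i ^ 2 / 2 + (B i j + B j i) * u j ^ 2 / 2
          - (B i j + B j i) * (u i - u j) ^ 2 / 2 := by
      intro i j; ring
    have hswap : (∑ i, ∑ j, (B i j + B j i) * u j ^ 2 / 2)
        = ∑ i, ∑ j, (B j i + B i j) * u i ^ 2 / 2 := Finset.sum_comm
    have hrow : ∀ i, (∑ j, B i j) = y i * M.mulVec x i := by
      intro i
      simp only [hB, Matrix.mulVec, dotProduct, Finset.mul_sum]
      congr 1; ext j; ring
    have hcol : ∀ i, (∑ j, B j i) = x i * Mᵀ.mulVec y i := by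
      intro i
      simp only [hB, Matrix.mulVec, dotProduct, Matrix.transpose_apply,
        Finset.mul_sum]
      congr 1; ext j; ring
    have key : dotProduct (star v) (Q *ᵥ v)
        = (∑ i, (y i * M.mulVec x i + x i * Mᵀ.mulVec y i) * u i ^ 2)
          + ∑ i, ∑ j, (-(B i j + B j i) / 2) * (u i - u j) ^ 2 := by
      rw [hquad]
      have : (∑ i, ∑ j, Q i j * v i * v j)
          = ∑ i, ∑ j, ((B i j + B j i) * u i ^ 2 / 2
              + (B i j + B j i) * u j ^ 2 / 2
              - (B i j + B j i) * (u i - u j) ^ 2 / 2) := by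
        refine Finset.sum_congr rfl fun i _ => Finset.sum_congr rfl fun j _ => ?_
        rw [hterm, hpair]
      rw [this]
      simp only [Finset.sum_sub_distrib, Finset.sum_add_distrib]
      rw [hswap]
      have h1 : (∑ i, ∑ j, (B i j + B j i) * u i ^ 2 / 2)
          + (∑ i, ∑ j, (B j i + B i j) * u i ^ 2 / 2)
          = ∑ i, (y i * M.mulVec x i + x i * Mᵀ.mulVec y i) * u i ^ 2 := by
        rw [← Finset.sum_add_distrib]
        refine Finset.sum_congr rfl fun i _ => ?_
        rw [← Finset.sum_add_distrib]
        have : (∑ j, ((B i j + B j i) * u i ^ 2 / 2 + (B j i + B i j) * u i ^ 2 / 2))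
            = ∑ j, (B i j + B j i) * u i ^ 2 := by
          refine Finset.sum_congr rfl fun j _ => ?_; ring
        rw [this]
        have h3 : (∑ j, (B i j + B j i) * u i ^ 2)
            = ((∑ j, B i j) + (∑ j, B j i)) * u i ^ 2 := by
          rw [← Finset.sum_mul, Finset.sum_add_distrib]
        rw [h3, hrow, hcol]
      rw [h1]
      have h2 : (∑ i, ∑ j, (-(B i j + B j i) / 2) * (u i - u j) ^ 2)
          = -∑ i, ∑ j, (B i j + B j i) * (u i - u j) ^ 2 / 2 := by
        rw [← Finset.sum_neg_distrib]
        refine Finset.sum_congr rfl fun i _ => ?_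
        rw [← Finset.sum_neg_distrib]
        refine Finset.sum_congr rfl fun j _ => ?_
        ring
      rw [h2]
      ring
    rw [key]
    have hT2 : 0 ≤ ∑ i, ∑ j, (-(B i j + B j i) / 2) * (u i - u j) ^ 2 := by
      refine Finset.sum_nonneg fun i _ => Finset.sum_nonneg fun j _ => ?_
      rcases eq_or_ne i j with rfl | hij
      · simp
      · have hBij : B i j ≤ 0 :=
          mul_nonpos_of_nonpos_of_nonneg
            (mul_nonpos_of_nonneg_of_nonpos (hy i).le (hM i j hij)) (hx j).le
        have hBji : B j i ≤ 0 :=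
          mul_nonpos_of_nonpos_of_nonneg
            (mul_nonpos_of_nonneg_of_nonpos (hy j).le (hM j i hij.symm)) (hx i).le
        have : 0 ≤ -(B i j + B j i) / 2 := by linarith
        positivity
    have hT1 : 0 < ∑ i, (y i * M.mulVec x i + x i * Mᵀ.mulVec y i) * u i ^ 2 := by
      obtain ⟨i0, hi0⟩ := Function.ne_iff.mp hv
      refine Finset.sum_pos' (fun i _ => ?_) ⟨i0, Finset.mem_univ i0, ?_⟩
      · have : 0 ≤ y i * M.mulVec x i + x i * Mᵀ.mulVec y i := by
          have := mul_pos (hy i) (hMx i)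
          have := mul_pos (hx i) (hMy i)
          linarith
        positivity
      · have hu0 : u i0 ≠ 0 := by
          simp only [hu]
          exact div_ne_zero hi0 (hxne i0)
        have hc : 0 < y i0 * M.mulVec x i0 + x i0 * Mᵀ.mulVec y i0 := by
          have := mul_pos (hy i0) (hMx i0)
          have := mul_pos (hx i0) (hMy i0)
          linarith
        positivity
    linarith
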